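/- arXiv:1112.3003 — 5 statements merged into one kernel-verified Lean document; each statement's English description precedes it below -/
import Mathlib

section
/- Let A be a positive definite n×n complex matrix and 0 ≤ r ≤ 1. Then A^r + A^(-r) ≤ A + A^(-1) in the Loewner order (i.e., (A + A^(-1)) - (A^r + A^(-r)) is positive semidefinite). -/
/-!
For `x > 0`, `x ^ t + x ^ (-t) = 2 cosh (t log x)` grows with `|t|`. Since `A ^ t` is the
continuous functional calculus of `x ↦ x ^ t` at `A`, whose spectrum is positive, and the functional
calculus is monotone for the Loewner order, this scalar inequality lifts to `A`.
-/

open Matrix Finset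
open scoped ComplexOrder

/-- Real power of a matrix via the spectral decomposition (junk value if not Hermitian). -/
noncomputable def mrpow {l : Type*} [Fintype l] [DecidableEq l] (A : Matrix l l ℂ) (r : ℝ) :
    Matrix l l ℂ :=
  if hA : A.IsHermitian then
    (hA.eigenvectorUnitary : Matrix l l ℂ) *
      Matrix.diagonal (fun i => ((hA.eigenvalues i ^ r : ℝ) : ℂ)) *
      (star hA.eigenvectorUnitary : Matrix l l ℂ)
  else A

/-- Weighted matrix geometric mean `A ♯ₜ B = A^(1/2) (A^(-1/2) B A^(-1/2))^t A^(1/2)`. -/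
noncomputable def wgmean {l : Type*} [Fintype l] [DecidableEq l] (A B : Matrix l l ℂ) (t : ℝ) :
    Matrix l l ℂ :=
  mrpow A (1/2) * mrpow (mrpow A (-(1/2)) * B * mrpow A (-(1/2))) t * mrpow A (1/2)

/-- Loewner order: `A ≤ B` iff `B - A` is positive semidefinite. -/
def loewnerLE {l : Type*} [Fintype l] [DecidableEq l] (A B : Matrix l l ℂ) : Prop :=
  (B - A).PosSemidef

open scoped MatrixOrder

theorem Real.rpow_add_rpow_neg_le_of_abs_le {x r s : ℝ} (hx : 0 < x) (hrs : |r| ≤ |s|) :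
    x ^ r + x ^ (-r) ≤ x ^ s + x ^ (-s) := by
  have hcosh (t : ℝ) : x ^ t + x ^ (-t) = 2 * Real.cosh (Real.log x * t) := by
    rw [Real.rpow_def_of_pos hx, Real.rpow_def_of_pos hx, Real.cosh_eq, mul_neg]
    ring
  rw [hcosh, hcosh, mul_le_mul_iff_right₀ two_pos, Real.cosh_le_cosh, abs_mul, abs_mul]
  exact mul_le_mul_of_nonneg_left hrs (abs_nonneg _)

section

variable {l : Type*} [Fintype l] [DecidableEq l]

theorem mrpow_eq_cfc {A : Matrix l l ℂ} (hA : A.IsHermitian) (r : ℝ) :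
    mrpow A r = cfc (fun x : ℝ => x ^ r) A := by
  rw [hA.cfc_eq, IsHermitian.cfc, Unitary.conjStarAlgAut_apply, mrpow, dif_pos hA]
  rfl

theorem mrpow_one {A : Matrix l l ℂ} (hA : A.IsHermitian) : mrpow A 1 = A := by
  simp only [mrpow_eq_cfc hA, Real.rpow_one, cfc_id' ℝ A]

theorem loewnerLE_iff_le {A B : Matrix l l ℂ} : loewnerLE A B ↔ A ≤ B := Iff.rfl

theorem Matrix.PosDef.pos_of_mem_spectrum {A : Matrix l l ℂ} (hA : A.PosDef) {x : ℝ}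
    (hx : x ∈ spectrum ℝ A) : 0 < x := by
  rw [hA.1.spectrum_real_eq_range_eigenvalues] at hx
  obtain ⟨i, rfl⟩ := hx
  exact hA.eigenvalues_pos i

theorem mrpow_add_mrpow_neg_le_of_abs_le {A : Matrix l l ℂ} (hA : A.PosDef) {r s : ℝ}
    (hrs : |r| ≤ |s|) : loewnerLE (mrpow A r + mrpow A (-r)) (mrpow A s + mrpow A (-s)) := by
  have hcont (f : ℝ → ℝ) : ContinuousOn f (spectrum ℝ A) := A.finite_real_spectrum.continuousOn f
  simp only [loewnerLE_iff_le, mrpow_eq_cfc hA.1]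
  rw [← cfc_add A _ _ (hcont _) (hcont _), ← cfc_add A _ _ (hcont _) (hcont _)]
  exact cfc_mono (fun x hx => Real.rpow_add_rpow_neg_le_of_abs_le (hA.pos_of_mem_spectrum hx) hrs)
    (hcont _) (hcont _)

end

theorem matrix_rpow_add_rpow_neg_le {l : Type*} [Fintype l] [DecidableEq l]
    {A : Matrix l l ℂ} (hA : A.PosDef) (r : ℝ) (hr0 : 0 ≤ r) (hr1 : r ≤ 1) :
    loewnerLE (mrpow A r + mrpow A (-r)) (A + mrpow A (-1)) := by
  have hrs : |r| ≤ |1| := by rwa [abs_one, abs_of_nonneg hr0]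
  simpa only [mrpow_one hA.1] using mrpow_add_mrpow_neg_le_of_abs_le hA hrs
end

section
/- Classical Callebaut inequality (middle step): if 0 ≤ t ≤ s ≤ 1/2 or 1/2 ≤ s ≤ t ≤ 1, and a_1,...,a_m, b_1,...,b_m are positive reals, then (∑_j a_j^s b_j^(1-s)) · (∑_j a_j^(1-s) b_j^s) ≤ (∑_j a_j^t b_j^(1-t)) · (∑_j a_j^(1-t) b_j^t). -/
/-!
With the exponent measured from `1/2`, `x ^ u * y ^ (1 - u) + x ^ (1 - u) * y ^ u` equals
`2 √(xy) cosh ((u - 1/2) log (x / y))`, which increases with `|u - 1/2|`. Expanding the product of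
the two sums as a double sum over pairs `(j, k)` and symmetrising in `j ↔ k` turns it into half the
sum of these expressions at `x = a j * b k`, `y = a k * b j`, so the inequality holds termwise.
-/

open Finset Real

theorem rpow_mul_rpow_one_sub_add_eq_cosh {x y : ℝ} (hx : 0 < x) (hy : 0 < y) (u : ℝ) :
    x ^ u * y ^ (1 - u) + x ^ (1 - u) * y ^ u =
      2 * exp ((log x + log y) / 2) * cosh ((u - 1 / 2) * (log x - log y)) := by
  rw [cosh_eq, mul_div_assoc', mul_assoc, mul_div_cancel_left₀ _ two_ne_zero, mul_add,
    ← exp_add, ← exp_add, rpow_def_of_pos hx, rpow_def_of_pos hy, rpow_def_of_pos hx,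
    rpow_def_of_pos hy, ← exp_add, ← exp_add]
  congr 2 <;> ring

theorem rpow_mul_rpow_one_sub_add_le {x y : ℝ} (hx : 0 < x) (hy : 0 < y) {s t : ℝ}
    (hst : |s - 1 / 2| ≤ |t - 1 / 2|) :
    x ^ s * y ^ (1 - s) + x ^ (1 - s) * y ^ s ≤ x ^ t * y ^ (1 - t) + x ^ (1 - t) * y ^ t := by
  rw [rpow_mul_rpow_one_sub_add_eq_cosh hx hy, rpow_mul_rpow_one_sub_add_eq_cosh hx hy]
  gcongr
  rw [cosh_le_cosh, abs_mul, abs_mul]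
  gcongr

theorem two_mul_sum_rpow_mul_sum_rpow {ι : Type*} [Fintype ι] {a b : ι → ℝ}
    (ha : ∀ i, 0 ≤ a i) (hb : ∀ i, 0 ≤ b i) (u : ℝ) :
    2 * ((∑ i, a i ^ u * b i ^ (1 - u)) * (∑ i, a i ^ (1 - u) * b i ^ u)) =
      ∑ i, ∑ j, ((a i * b j) ^ u * (a j * b i) ^ (1 - u) +
        (a i * b j) ^ (1 - u) * (a j * b i) ^ u) := by
  have hterm (i j : ι) : (a i * b j) ^ u * (a j * b i) ^ (1 - u) =
      a i ^ u * b i ^ (1 - u) * (a j ^ (1 - u) * b j ^ u) := by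
    rw [mul_rpow (ha i) (hb j), mul_rpow (ha j) (hb i)]; ring
  have hterm_swap (i j : ι) : (a i * b j) ^ (1 - u) * (a j * b i) ^ u =
      a j ^ u * b j ^ (1 - u) * (a i ^ (1 - u) * b i ^ u) := by
    rw [mul_rpow (ha i) (hb j), mul_rpow (ha j) (hb i)]; ring
  simp only [sum_add_distrib, hterm, hterm_swap]
  rw [sum_comm (f := fun i j => a j ^ u * b j ^ (1 - u) * (a i ^ (1 - u) * b i ^ u)),
    ← sum_mul_sum]
  ring

theorem sum_rpow_mul_sum_rpow_le {ι : Type*} [Fintype ι] {a b : ι → ℝ}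
    (ha : ∀ i, 0 < a i) (hb : ∀ i, 0 < b i) {s t : ℝ} (hst : |s - 1 / 2| ≤ |t - 1 / 2|) :
    (∑ i, a i ^ s * b i ^ (1 - s)) * (∑ i, a i ^ (1 - s) * b i ^ s) ≤
      (∑ i, a i ^ t * b i ^ (1 - t)) * (∑ i, a i ^ (1 - t) * b i ^ t) := by
  have hsum := two_mul_sum_rpow_mul_sum_rpow (fun i => (ha i).le) (fun i => (hb i).le)
  refine le_of_mul_le_mul_left ?_ two_pos
  rw [hsum, hsum]
  exact sum_le_sum fun i _ => sum_le_sum fun j _ =>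
    rpow_mul_rpow_one_sub_add_le (mul_pos (ha i) (hb j)) (mul_pos (ha j) (hb i)) hst

theorem callebaut_middle (m : ℕ) (a b : Fin m → ℝ) (ha : ∀ j, 0 < a j) (hb : ∀ j, 0 < b j)
    (s t : ℝ)
    (h : (0 ≤ t ∧ t ≤ s ∧ s ≤ 1/2) ∨ (1/2 ≤ s ∧ s ≤ t ∧ t ≤ 1)) :
    (∑ j, a j ^ s * b j ^ (1 - s)) * (∑ j, a j ^ (1 - s) * b j ^ s) ≤
      (∑ j, a j ^ t * b j ^ (1 - t)) * (∑ j, a j ^ (1 - t) * b j ^ t) := by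
  refine sum_rpow_mul_sum_rpow_le ha hb ?_
  rcases h with ⟨-, hts, hs⟩ | ⟨hs, hst, -⟩
  · rw [abs_of_nonpos (by linarith), abs_of_nonpos (by linarith)]
    linarith
  · rw [abs_of_nonneg (by linarith), abs_of_nonneg (by linarith)]
    linarith
end

section
/- The Callebaut function is increasing in |r|: for positive reals a_1,...,a_m, b_1,...,b_m, a fixed real s, and 0 ≤ r_1 ≤ r_2 (with all exponents defined), the function f(r) = (∑_j a_j^(s+r) b_j^(s-r)) · (∑_j a_j^(s-r) b_j^(s+r)) satisfies f(r_1) ≤ f(r_2). -/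
/-!
With `x j = a j ^ (s + r₂) * b j ^ (s - r₂)` and `y j = a j ^ (s - r₂) * b j ^ (s + r₂)`, the terms
of both sums at `r₁` are geometric means `x j ^ t * y j ^ (1 - t)` and `y j ^ t * x j ^ (1 - t)`
for `t = (r₂ + r₁) / (2 r₂) ∈ [0, 1]`. Hölder's inequality bounds the two sums by
`X ^ t * Y ^ (1 - t)` and `Y ^ t * X ^ (1 - t)`, where `X = ∑ x j` and `Y = ∑ y j` are the two sums
at `r₂`, and the product of these bounds is `X * Y`.
-/

open Finset Real

namespace Real

theorem sum_rpow_mul_rpow_one_sub_le {ι : Type*} (s : Finset ι) {x y : ι → ℝ}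
    (hx : ∀ i ∈ s, 0 ≤ x i) (hy : ∀ i ∈ s, 0 ≤ y i) {t : ℝ} (ht₀ : 0 ≤ t) (ht₁ : t ≤ 1) :
    ∑ i ∈ s, x i ^ t * y i ^ (1 - t) ≤ (∑ i ∈ s, x i) ^ t * (∑ i ∈ s, y i) ^ (1 - t) := by
  rcases ht₀.eq_or_lt with rfl | ht₀
  · simp
  rcases ht₁.eq_or_lt with rfl | ht₁
  · simp
  have hconj : t⁻¹.HolderConjugate (1 - t)⁻¹ :=
    .inv_inv ht₀ (sub_pos.2 ht₁) (add_sub_cancel t 1)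
  have holder := inner_le_Lp_mul_Lq_of_nonneg s hconj
    (fun i hi => rpow_nonneg (hx i hi) t) (fun i hi => rpow_nonneg (hy i hi) (1 - t))
  have cancel : ∀ {u : ℝ} {z : ι → ℝ}, (∀ i ∈ s, 0 ≤ z i) → u ≠ 0 →
      ∑ i ∈ s, (z i ^ u) ^ u⁻¹ = ∑ i ∈ s, z i := fun hz hu =>
    sum_congr rfl fun i hi => rpow_rpow_inv (hz i hi) hu
  simpa only [cancel hx ht₀.ne', cancel hy (sub_pos.2 ht₁).ne', one_div, inv_inv] using holder

theorem sum_rpow_mul_rpow_le_interpolate {ι : Type*} (s : Finset ι) {a b : ι → ℝ}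
    (ha : ∀ i ∈ s, 0 < a i) (hb : ∀ i ∈ s, 0 < b i) {t : ℝ} (ht₀ : 0 ≤ t) (ht₁ : t ≤ 1)
    {α β α₁ β₁ α₂ β₂ : ℝ} (hα : α₁ * t + α₂ * (1 - t) = α) (hβ : β₁ * t + β₂ * (1 - t) = β) :
    ∑ i ∈ s, a i ^ α * b i ^ β ≤
      (∑ i ∈ s, a i ^ α₁ * b i ^ β₁) ^ t * (∑ i ∈ s, a i ^ α₂ * b i ^ β₂) ^ (1 - t) := by
  have term_eq : ∀ i ∈ s,
      a i ^ α * b i ^ β = (a i ^ α₁ * b i ^ β₁) ^ t * (a i ^ α₂ * b i ^ β₂) ^ (1 - t) := by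
    intro i hi
    have ha := ha i hi
    have hb := hb i hi
    rw [mul_rpow (by positivity) (by positivity), mul_rpow (by positivity) (by positivity),
      ← rpow_mul ha.le, ← rpow_mul ha.le, ← rpow_mul hb.le, ← rpow_mul hb.le,
      mul_mul_mul_comm, ← rpow_add ha, ← rpow_add hb, hα, hβ]
  rw [sum_congr rfl term_eq]
  have term_nonneg : ∀ {γ δ : ℝ}, ∀ i ∈ s, 0 ≤ a i ^ γ * b i ^ δ := fun i hi =>
    (mul_pos (rpow_pos_of_pos (ha i hi) _) (rpow_pos_of_pos (hb i hi) _)).le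
  exact sum_rpow_mul_rpow_one_sub_le s term_nonneg term_nonneg ht₀ ht₁

end Real

theorem callebaut_increasing (m : ℕ) (a b : Fin m → ℝ) (ha : ∀ j, 0 < a j) (hb : ∀ j, 0 < b j)
    (s r₁ r₂ : ℝ) (hr₁ : 0 ≤ r₁) (hr : r₁ ≤ r₂) :
    (∑ j, a j ^ (s + r₁) * b j ^ (s - r₁)) * (∑ j, a j ^ (s - r₁) * b j ^ (s + r₁)) ≤
      (∑ j, a j ^ (s + r₂) * b j ^ (s - r₂)) * (∑ j, a j ^ (s - r₂) * b j ^ (s + r₂)) := by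
  rcases hr.eq_or_lt with rfl | hlt
  · exact le_rfl
  have hr₂ : 0 < r₂ := hr₁.trans_lt hlt
  set t := (r₂ + r₁) / (2 * r₂)
  have ht : 2 * r₂ * t = r₂ + r₁ := mul_div_cancel₀ _ (by positivity)
  have ht₁ : t ≤ 1 := div_le_one_of_le₀ (by linarith) (by positivity)
  have sum_nonneg' (γ δ : ℝ) : 0 ≤ ∑ j, a j ^ γ * b j ^ δ :=
    sum_nonneg fun j _ => (mul_pos (rpow_pos_of_pos (ha j) γ) (rpow_pos_of_pos (hb j) δ)).le
  have interpolate {α β α₁ β₁ α₂ β₂ : ℝ} (hα : α₁ * t + α₂ * (1 - t) = α)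
      (hβ : β₁ * t + β₂ * (1 - t) = β) := Real.sum_rpow_mul_rpow_le_interpolate univ
    (fun j _ => ha j) (fun j _ => hb j) (by positivity) ht₁ hα hβ
  set X := ∑ j, a j ^ (s + r₂) * b j ^ (s - r₂)
  set Y := ∑ j, a j ^ (s - r₂) * b j ^ (s + r₂)
  have hX : 0 ≤ X := sum_nonneg' _ _
  have hY : 0 ≤ Y := sum_nonneg' _ _
  calc _ ≤ (X ^ t * Y ^ (1 - t)) * (Y ^ t * X ^ (1 - t)) :=
        mul_le_mul (interpolate (by linarith) (by linarith))
          (interpolate (by linarith) (by linarith)) (sum_nonneg' _ _) (by positivity)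
    _ = X * Y := by
        rw [mul_comm (Y ^ t), mul_mul_mul_comm, ← rpow_add' hX (by simp),
          ← rpow_add' hY (by simp), add_sub_cancel, sub_add_cancel, rpow_one, rpow_one]
end

section
/- For positive definite matrices A and B and the weighted geometric mean A♯_t B = A^(1/2)(A^(-1/2) B A^(-1/2))^t A^(1/2), one has (A♯_t B)♯(A♯_(1-t) B) = A♯B for all t ∈ [0,1], where ♯ = ♯_(1/2) is the geometric mean. -/
open Matrix Finset
open scoped ComplexOrder

/-!
With `c = a^(-1/2) b a^(-1/2)` one has `a ♯ₛ b = a^(1/2) c^s a^(1/2)`, so the means multiply like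
powers: `(a ♯ᵣ b) (a ♯ₛ b)⁻¹ (a ♯ᵤ b) = a ♯_(r - s + u) b`. In particular `g = a ♯ b` solves the
Riccati equation `g (a ♯ₜ b)⁻¹ g = a ♯_(1-t) b`. Conjugating by `x^(-1/2)` turns `g x⁻¹ g = y`
into `h² = x^(-1/2) y x^(-1/2)` with `h = x^(-1/2) g x^(-1/2) ≥ 0`, so by uniqueness of positive
square roots `x ♯ y` is its only positive solution. This works in any algebra with a continuous
functional calculus; for matrices, `mrpow` is the `rpow` of that calculus on positive
semidefinite matrices.
-/

namespace CFC

open scoped Ring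

variable {A : Type*} [PartialOrder A] [Ring A] [StarRing A] [TopologicalSpace A]
  [StarOrderedRing A] [Algebra ℝ A] [ContinuousFunctionalCalculus ℝ A IsSelfAdjoint]
  [NonnegSpectrumClass ℝ A]

noncomputable def wgmean (a b : A) (t : ℝ) : A :=
  a ^ (1 / 2 : ℝ) * (a ^ (-(1 / 2) : ℝ) * b * a ^ (-(1 / 2) : ℝ)) ^ t * a ^ (1 / 2 : ℝ)

lemma isStrictlyPositive_rpow_mul_mul_rpow {a b : A} (ha : IsStrictlyPositive a)
    (hb : IsStrictlyPositive b) (r : ℝ) :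
    IsStrictlyPositive (a ^ r * b * a ^ r) :=
  IsStrictlyPositive.conjugate_of_isUnit_of_isSelfAdjoint b _ (ha.rpow a r).isUnit

lemma isStrictlyPositive_wgmean {a b : A} (ha : IsStrictlyPositive a)
    (hb : IsStrictlyPositive b) (t : ℝ) : IsStrictlyPositive (wgmean a b t) :=
  isStrictlyPositive_rpow_mul_mul_rpow ha
    (IsStrictlyPositive.rpow _ t (isStrictlyPositive_rpow_mul_mul_rpow ha hb _)) _

lemma inverse_rpow' {a : A} (ha : IsStrictlyPositive a) (x : ℝ) : (a ^ x)⁻¹ʳ = a ^ (-x) :=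
  calc (a ^ x)⁻¹ʳ = (a ^ x)⁻¹ʳ * (a ^ x * a ^ (-x)) := by rw [rpow_mul_rpow_neg x ha, mul_one]
    _ = a ^ (-x) := Ring.inverse_mul_cancel_left _ _ (ha.rpow a x).isUnit

lemma wgmean_mul_inverse_mul {a b : A} (ha : IsStrictlyPositive a)
    (hb : IsStrictlyPositive b) (r s u : ℝ) :
    wgmean a b r * (wgmean a b s)⁻¹ʳ * wgmean a b u = wgmean a b (r - s + u) := by
  set c := a ^ (-(1 / 2) : ℝ) * b * a ^ (-(1 / 2) : ℝ)
  have hc : IsStrictlyPositive c := isStrictlyPositive_rpow_mul_mul_rpow ha hb _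
  have hpq : a ^ (1 / 2 : ℝ) * a ^ (-(1 / 2) : ℝ) = 1 := rpow_mul_rpow_neg _ ha
  have hqp : a ^ (-(1 / 2) : ℝ) * a ^ (1 / 2 : ℝ) = 1 := rpow_neg_mul_rpow _ ha
  have hw (x : ℝ) : wgmean a b x = a ^ (1 / 2 : ℝ) * c ^ x * a ^ (1 / 2 : ℝ) := rfl
  have hinv : (wgmean a b s)⁻¹ʳ = a ^ (-(1 / 2) : ℝ) * c ^ (-s) * a ^ (-(1 / 2) : ℝ) := by
    rw [wgmean, Ring.inverse_mul (.inr (ha.rpow a _).isUnit),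
      Ring.inverse_mul (.inl (ha.rpow a _).isUnit), inverse_rpow' ha, inverse_rpow' hc,
      mul_assoc]
  calc wgmean a b r * (wgmean a b s)⁻¹ʳ * wgmean a b u
      = a ^ (1 / 2 : ℝ) * (c ^ r * (a ^ (1 / 2 : ℝ) * a ^ (-(1 / 2) : ℝ)) * c ^ (-s) *
          (a ^ (-(1 / 2) : ℝ) * a ^ (1 / 2 : ℝ)) * c ^ u) * a ^ (1 / 2 : ℝ) := by
        rw [hinv, hw, hw]
        simp only [mul_assoc]
    _ = wgmean a b (r - s + u) := by
        rw [hpq, hqp, mul_one, mul_one, ← rpow_add hc.isUnit, ← rpow_add hc.isUnit,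
          ← sub_eq_add_neg, hw]

variable [IsSemitopologicalRing A] [T2Space A]

lemma wgmean_half_eq_of_mul_inverse_mul_eq {a b g : A} (ha : IsStrictlyPositive a)
    (hg : 0 ≤ g) (h : g * a⁻¹ʳ * g = b) : wgmean a b (1 / 2) = g := by
  set q := a ^ (-(1 / 2) : ℝ)
  have hq : IsSelfAdjoint q := .of_nonneg rpow_nonneg
  have hqq : q * q = a⁻¹ʳ := by
    rw [← rpow_add ha.isUnit, inverse_eq_rpow_neg_one]
    norm_num
  have hsq : (q * g * q) * (q * g * q) = q * b * q := by
    rw [← h, ← hqq]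
    simp only [mul_assoc]
  have hroot : (q * b * q) ^ (1 / 2 : ℝ) = q * g * q := by
    rw [← sqrt_eq_rpow]
    exact sqrt_unique hsq (hq.conjugate_nonneg hg)
  rw [wgmean, hroot]
  calc a ^ (1 / 2 : ℝ) * (q * g * q) * a ^ (1 / 2 : ℝ)
      = (a ^ (1 / 2 : ℝ) * q) * g * (q * a ^ (1 / 2 : ℝ)) := by simp only [mul_assoc]
    _ = g := by rw [rpow_mul_rpow_neg _ ha, rpow_neg_mul_rpow _ ha, one_mul, mul_one]

theorem wgmean_wgmean_wgmean_one_sub {a b : A} (ha : IsStrictlyPositive a)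
    (hb : IsStrictlyPositive b) (t : ℝ) :
    wgmean (wgmean a b t) (wgmean a b (1 - t)) (1 / 2) = wgmean a b (1 / 2) := by
  refine wgmean_half_eq_of_mul_inverse_mul_eq (isStrictlyPositive_wgmean ha hb t)
    (isStrictlyPositive_wgmean ha hb _).nonneg ?_
  rw [wgmean_mul_inverse_mul ha hb]
  ring_nf

end CFC

open scoped MatrixOrder

section Matrix

variable {l : Type*} [Fintype l] [DecidableEq l]

lemma mrpow_eq_rpow {A : Matrix l l ℂ} (hA : A.PosSemidef) (r : ℝ) : mrpow A r = A ^ r := by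
  rw [CFC.rpow_eq_cfc_real hA.nonneg, hA.1.cfc_eq]
  simp only [mrpow, dif_pos hA.1, Matrix.IsHermitian.cfc]
  rfl

lemma wgmean_eq_cfc_wgmean {A B : Matrix l l ℂ} (hA : A.PosSemidef) (hB : B.PosSemidef) (t : ℝ) :
    wgmean A B t = CFC.wgmean A B t := by
  have hC : 0 ≤ A ^ (-(1 / 2) : ℝ) * B * A ^ (-(1 / 2) : ℝ) :=
    (IsSelfAdjoint.of_nonneg CFC.rpow_nonneg).conjugate_nonneg hB.nonneg
  simp only [wgmean, mrpow_eq_rpow hA, mrpow_eq_rpow hC.posSemidef]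
  rfl

end Matrix

theorem gmean_of_wgmean_pair_general {l : Type*} [Fintype l] [DecidableEq l]
    {A B : Matrix l l ℂ} (hA : A.PosDef) (hB : B.PosDef) (t : ℝ) :
    wgmean (wgmean A B t) (wgmean A B (1 - t)) (1/2) = wgmean A B (1/2) := by
  have hmean (s : ℝ) : IsStrictlyPositive (CFC.wgmean A B s) :=
    CFC.isStrictlyPositive_wgmean hA.isStrictlyPositive hB.isStrictlyPositive s
  simp only [wgmean_eq_cfc_wgmean hA.posSemidef hB.posSemidef]
  rw [wgmean_eq_cfc_wgmean (hmean t).nonneg.posSemidef (hmean (1 - t)).nonneg.posSemidef]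
  exact CFC.wgmean_wgmean_wgmean_one_sub hA.isStrictlyPositive hB.isStrictlyPositive t

theorem gmean_of_wgmean_pair {l : Type*} [Fintype l] [DecidableEq l]
    {A B : Matrix l l ℂ} (hA : A.PosDef) (hB : B.PosDef) (t : ℝ) (ht0 : 0 ≤ t) (ht1 : t ≤ 1) :
    wgmean (wgmean A B t) (wgmean A B (1 - t)) (1/2) = wgmean A B (1/2) :=
  gmean_of_wgmean_pair_general hA hB t
end

section
/- For positive definite matrices A, B ∈ M_n(ℂ) and 0 ≤ α ≤ β ≤ 1, one has A^(1+α) ⊗ B^(1-α) + A^(1-α) ⊗ B^(1+α) ≤ A^(1+β) ⊗ B^(1-β) + A^(1-β) ⊗ B^(1+β) in the Loewner order on M_{n²}(ℂ); i.e., the function f(t) = A^(1+t) ⊗ B^(1-t) + A^(1-t) ⊗ B^(1+t) is increasing on [0,1]. -/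
/-!
Both Kronecker products are diagonalised by the same unitary `U ⊗ V` built from eigenbases of
`A` and `B`, so the claim reduces to the eigenvalue pairs `(a, b)`. There
`a ^ (1 + t) * b ^ (1 - t) + a ^ (1 - t) * b ^ (1 + t) = 2 a b cosh (t log (a / b))`,
which is increasing in `|t|`.
-/

open Matrix Finset
open scoped ComplexOrder

namespace Real

theorem rpow_mul_rpow_add_rpow_mul_rpow_eq_mul_cosh {a b : ℝ} (ha : 0 < a) (hb : 0 < b) (t : ℝ) :
    a ^ (1 + t) * b ^ (1 - t) + a ^ (1 - t) * b ^ (1 + t) =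
      2 * a * b * cosh (t * (log a - log b)) := by
  conv_rhs => rw [← exp_log ha, ← exp_log hb]
  simp only [rpow_def_of_pos ha, rpow_def_of_pos hb, cosh_eq, ← exp_add, log_exp]
  field_simp
  simp only [mul_add, ← exp_add]
  ring_nf

theorem rpow_mul_rpow_add_rpow_mul_rpow_le {a b : ℝ} (ha : 0 < a) (hb : 0 < b) {α β : ℝ}
    (hαβ : |α| ≤ |β|) :
    a ^ (1 + α) * b ^ (1 - α) + a ^ (1 - α) * b ^ (1 + α) ≤
      a ^ (1 + β) * b ^ (1 - β) + a ^ (1 - β) * b ^ (1 + β) := by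
  simp only [rpow_mul_rpow_add_rpow_mul_rpow_eq_mul_cosh ha hb]
  gcongr
  rw [cosh_le_cosh, abs_mul, abs_mul]
  gcongr

end Real

section Kronecker

open Kronecker

variable {l m : Type*} [Fintype l] [DecidableEq l] [Fintype m] [DecidableEq m]

theorem mrpow_eq_of_isHermitian {A : Matrix l l ℂ} (hA : A.IsHermitian) (r : ℝ) :
    mrpow A r = (hA.eigenvectorUnitary : Matrix l l ℂ) *
      diagonal (fun i => ((hA.eigenvalues i ^ r : ℝ) : ℂ)) *
      (hA.eigenvectorUnitary : Matrix l l ℂ)ᴴ :=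
  dif_pos hA

theorem mrpow_kronecker_mrpow {A : Matrix l l ℂ} {B : Matrix m m ℂ} (hA : A.IsHermitian)
    (hB : B.IsHermitian) (r s : ℝ) :
    mrpow A r ⊗ₖ mrpow B s =
      ((hA.eigenvectorUnitary : Matrix l l ℂ) ⊗ₖ (hB.eigenvectorUnitary : Matrix m m ℂ)) *
        diagonal (fun p : l × m => ((hA.eigenvalues p.1 ^ r * hB.eigenvalues p.2 ^ s : ℝ) : ℂ)) *
        ((hA.eigenvectorUnitary : Matrix l l ℂ) ⊗ₖ (hB.eigenvectorUnitary : Matrix m m ℂ))ᴴ := by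
  rw [mrpow_eq_of_isHermitian hA, mrpow_eq_of_isHermitian hB, mul_kronecker_mul,
    mul_kronecker_mul, diagonal_kronecker_diagonal, conjTranspose_kronecker]
  push_cast
  rfl

theorem loewnerLE_kronecker_of_abs_le {A : Matrix l l ℂ} {B : Matrix m m ℂ} (hA : A.PosDef)
    (hB : B.PosDef) {α β : ℝ} (hαβ : |α| ≤ |β|) :
    loewnerLE (mrpow A (1 + α) ⊗ₖ mrpow B (1 - α) + mrpow A (1 - α) ⊗ₖ mrpow B (1 + α))
      (mrpow A (1 + β) ⊗ₖ mrpow B (1 - β) + mrpow A (1 - β) ⊗ₖ mrpow B (1 + β)) := by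
  rw [loewnerLE]
  simp only [mrpow_kronecker_mrpow hA.isHermitian hB.isHermitian, ← add_mul, ← mul_add,
    ← sub_mul, ← mul_sub, diagonal_add, diagonal_sub]
  refine PosSemidef.mul_mul_conjTranspose_same (posSemidef_diagonal_iff.2 fun p => ?_) _
  exact_mod_cast sub_nonneg.2 <| Real.rpow_mul_rpow_add_rpow_mul_rpow_le
    (hA.eigenvalues_pos p.1) (hB.eigenvalues_pos p.2) hαβ

end Kronecker

open Kronecker in
theorem tensor_monotone_general {l : Type*} [Fintype l] [DecidableEq l]
    {A B : Matrix l l ℂ} (hA : A.PosDef) (hB : B.PosDef)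
    (α β : ℝ) (h0 : 0 ≤ α) (hαβ : α ≤ β) :
    loewnerLE (mrpow A (1 + α) ⊗ₖ mrpow B (1 - α) + mrpow A (1 - α) ⊗ₖ mrpow B (1 + α))
      (mrpow A (1 + β) ⊗ₖ mrpow B (1 - β) + mrpow A (1 - β) ⊗ₖ mrpow B (1 + β)) :=
  loewnerLE_kronecker_of_abs_le hA hB (abs_le_abs hαβ (by linarith))

open Kronecker in
theorem tensor_monotone {l : Type*} [Fintype l] [DecidableEq l]
    {A B : Matrix l l ℂ} (hA : A.PosDef) (hB : B.PosDef)
    (α β : ℝ) (h0 : 0 ≤ α) (hαβ : α ≤ β) (h1 : β ≤ 1) :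
    loewnerLE (mrpow A (1 + α) ⊗ₖ mrpow B (1 - α) + mrpow A (1 - α) ⊗ₖ mrpow B (1 + α))
      (mrpow A (1 + β) ⊗ₖ mrpow B (1 - β) + mrpow A (1 - β) ⊗ₖ mrpow B (1 + β)) :=
  tensor_monotone_general hA hB α β h0 hαβ
end
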